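/- The eigenvalues of a quaternionic linear map viewed as a real linear map come in fours (λ, λ, conj λ, conj λ): for every n ∈ ℕ and all A, B ∈ Matrix (Fin n) (Fin n) ℂ, let M = fromBlocks A B (-(B.map (starRingEnd ℂ))) (A.map (starRingEnd ℂ)) be the associated quaternionic block matrix and ℜ(M) its realification (a real matrix indexed by (Fin n ⊕ Fin n) ⊕ (Fin n ⊕ Fin n)). Then (ℜ(M).charpoly).map (algebraMap ℝ ℂ) = (M.charpoly)^2. -/

import Mathlib

/-!
Over `ℂ`, the realification of a complex matrix `C` is similar to `diag(conj C, C)`: the block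
columns of `[[1, 1], [i, -i]]` span the `-i` and `+i` eigenspaces of the complex structure, on
which the realification acts by `conj C` and `C`. Hence its characteristic polynomial is
`charpoly (conj C) * charpoly C`. For a quaternionic matrix `M`, conjugation by
`[[0, 1], [-1, 0]]` turns `M` into `conj M`, so both factors equal `charpoly M`.
-/

open Matrix Polynomial Complex

namespace Matrix

variable {m : Type*} [Fintype m] [DecidableEq m]

theorem charpoly_mul_mul_of_mul_eq_one {R : Type*} [CommRing R] {P Q : Matrix m m R}
    (h : Q * P = 1) (N : Matrix m m R) : (P * N * Q).charpoly = N.charpoly := by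
  rw [charpoly_mul_comm, ← mul_assoc, h, one_mul]

def realify (C : Matrix m m ℂ) : Matrix (m ⊕ m) (m ⊕ m) ℝ :=
  fromBlocks (C.map re) (-(C.map im)) (C.map im) (C.map re)

theorem realify_map_ofReal (C : Matrix m m ℂ) :
    C.realify.map (algebraMap ℝ ℂ) =
      fromBlocks 1 1 (I • 1) (-(I • 1)) * fromBlocks (C.map (starRingEnd ℂ)) 0 0 C *
        fromBlocks ((2⁻¹ : ℂ) • 1) ((-I / 2) • 1) ((2⁻¹ : ℂ) • 1) ((I / 2) • 1) := by
  ext (i | i) (j | j) <;>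
    simp [realify, fromBlocks_multiply] <;> apply Complex.ext <;> simp <;> ring

theorem charpoly_realify (C : Matrix m m ℂ) :
    C.realify.charpoly.map (algebraMap ℝ ℂ) = (C.map (starRingEnd ℂ)).charpoly * C.charpoly := by
  have hQP : (fromBlocks ((2⁻¹ : ℂ) • 1) ((-I / 2) • 1) ((2⁻¹ : ℂ) • 1) ((I / 2) • 1) :
      Matrix (m ⊕ m) (m ⊕ m) ℂ) * fromBlocks 1 1 (I • 1) (-(I • 1)) = 1 := by
    rw [fromBlocks_multiply, ← fromBlocks_one]
    congr 1 <;>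
      simp only [Matrix.mul_one, smul_mul_smul_comm, mul_neg, ← sub_eq_add_neg, ← add_smul,
        ← sub_smul] <;>
      norm_num [← mul_div_right_comm, I_mul_I]
  rw [← charpoly_map, realify_map_ofReal, charpoly_mul_mul_of_mul_eq_one hQP,
    charpoly_fromBlocks_zero₁₂]

theorem map_starRingEnd_quaternionic (A B : Matrix m m ℂ) :
    (fromBlocks A B (-(B.map (starRingEnd ℂ))) (A.map (starRingEnd ℂ))).map (starRingEnd ℂ) =
      fromBlocks 0 1 (-1) 0 *
        fromBlocks A B (-(B.map (starRingEnd ℂ))) (A.map (starRingEnd ℂ)) *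
          fromBlocks 0 (-1) 1 0 := by
  ext (i | i) (j | j) <;> simp [fromBlocks_multiply]

theorem charpoly_map_starRingEnd_quaternionic (A B : Matrix m m ℂ) :
    ((fromBlocks A B (-(B.map (starRingEnd ℂ))) (A.map (starRingEnd ℂ))).map
        (starRingEnd ℂ)).charpoly =
      (fromBlocks A B (-(B.map (starRingEnd ℂ))) (A.map (starRingEnd ℂ))).charpoly := by
  have hKJ : (fromBlocks 0 (-1) 1 0 : Matrix (m ⊕ m) (m ⊕ m) ℂ) * fromBlocks 0 1 (-1) 0 = 1 := by
    simp [fromBlocks_multiply]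
  rw [map_starRingEnd_quaternionic, charpoly_mul_mul_of_mul_eq_one hKJ]

end Matrix

/-- The eigenvalues of a quaternionic linear map viewed as a real linear map
come in fours `(λ, λ, conj λ, conj λ)`: the characteristic polynomial of the
realification of the quaternionic block matrix
`M = [[A, B], [-conj B, conj A]]` is the square of the characteristic
polynomial of `M` (whose roots already come in conjugate pairs). -/
theorem realification_quaternionic_charpoly_sq
    (n : ℕ) (A B : Matrix (Fin n) (Fin n) ℂ) :
    ∀ M : Matrix (Fin n ⊕ Fin n) (Fin n ⊕ Fin n) ℂ,
      M = Matrix.fromBlocks A B (-(B.map (starRingEnd ℂ))) (A.map (starRingEnd ℂ)) →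
      ((Matrix.fromBlocks (M.map Complex.re) (-(M.map Complex.im))
          (M.map Complex.im) (M.map Complex.re)).charpoly).map (algebraMap ℝ ℂ) =
        M.charpoly ^ 2 := by
  rintro M rfl
  rw [← realify, charpoly_realify, charpoly_map_starRingEnd_quaternionic, sq]
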